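/- arXiv:2307.15205 — 3 statements merged into one kernel-verified Lean document; each statement's English description precedes it below -/
import Mathlib

section
/- Fix K ≥ 1, λ > 0, and N ≥ 2K+1. Let G* be any directed graph on N nodes with out-degree exactly K that minimizes the objective L(G) = Σ_{i=1}^N Σ_{x ∈ C_i} R_i(x) + λ Σ_{i=1}^N |G_i|², where C_i is the out-neighborhood of node i, R_i are rank functions (with R_i a bijection from the other N−1 nodes onto {1,...,N−1}), and |G_i| is the total degree of node i. Then the maximum total degree in G* satisfies max_i |G_i| ≤ 2K + 1 + (N−1)/(2λ). -/
open Finset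

/-- The total degree (out-degree plus in-degree) of node `i` in the directed graph whose
out-neighborhoods are `C`. -/
def totalDeg {N : ℕ} (C : Fin N → Finset (Fin N)) (i : Fin N) : ℕ :=
  (C i).card + (Finset.univ.filter (fun j => i ∈ C j)).card

/-- The K-RNNG objective: the sum of the ranks of each node's out-neighbors plus
`λ` times the sum of squared total degrees. -/
def objective {N : ℕ} (R : Fin N → Fin N → ℕ) (lam : ℝ) (C : Fin N → Finset (Fin N)) : ℝ :=
  (∑ i : Fin N, ∑ j ∈ C i, (R i j : ℝ)) + lam * ∑ i : Fin N, (totalDeg C i : ℝ) ^ 2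

lemma sum_diff_one {α : Type*} [Fintype α] [DecidableEq α] (f g : α → ℝ) (i : α)
    (h : ∀ x, x ≠ i → f x = g x) :
    ∑ x, f x = ∑ x, g x - g i + f i := by
  have h1 : ∑ x ∈ univ.erase i, f x + f i = ∑ x, f x :=
    Finset.sum_erase_add _ _ (mem_univ i)
  have h2 : ∑ x ∈ univ.erase i, g x + g i = ∑ x, g x :=
    Finset.sum_erase_add _ _ (mem_univ i)
  have h3 : ∑ x ∈ univ.erase i, f x = ∑ x ∈ univ.erase i, g x :=
    Finset.sum_congr rfl (fun x hx => h x (Finset.ne_of_mem_erase hx))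
  linarith

lemma sum_diff_two {α : Type*} [Fintype α] [DecidableEq α] (f g : α → ℝ) (j k : α)
    (hjk : j ≠ k) (h : ∀ x, x ≠ j → x ≠ k → f x = g x) :
    ∑ x, f x = ∑ x, g x - g j - g k + f j + f k := by
  have hk : k ∈ univ.erase j := Finset.mem_erase.mpr ⟨Ne.symm hjk, mem_univ k⟩
  have h1f : ∑ x ∈ univ.erase j, f x + f j = ∑ x, f x :=
    Finset.sum_erase_add _ _ (mem_univ j)
  have h1g : ∑ x ∈ univ.erase j, g x + g j = ∑ x, g x :=
    Finset.sum_erase_add _ _ (mem_univ j)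
  have h2f : ∑ x ∈ (univ.erase j).erase k, f x + f k = ∑ x ∈ univ.erase j, f x :=
    Finset.sum_erase_add _ _ hk
  have h2g : ∑ x ∈ (univ.erase j).erase k, g x + g k = ∑ x ∈ univ.erase j, g x :=
    Finset.sum_erase_add _ _ hk
  have h3 : ∑ x ∈ (univ.erase j).erase k, f x = ∑ x ∈ (univ.erase j).erase k, g x := by
    refine Finset.sum_congr rfl (fun x hx => ?_)
    have hx1 := Finset.ne_of_mem_erase hx
    have hx2 := Finset.ne_of_mem_erase (Finset.mem_of_mem_erase hx)
    exact h x hx2 hx1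
  linarith

/-- Any minimizer `G*` of the K-RNNG objective over directed graphs with out-degree
exactly `K` has maximum total degree at most `2K + 1 + (N-1)/(2λ)`. -/
theorem max_degree_bound_of_minimizer (N K : ℕ) (hK : 1 ≤ K) (hN : 2 * K + 1 ≤ N)
    (lam : ℝ) (hlam : 0 < lam)
    (R : Fin N → Fin N → ℕ)
    (hR_mem : ∀ i j : Fin N, j ≠ i → 1 ≤ R i j ∧ R i j ≤ N - 1)
    (hR_inj : ∀ i j j' : Fin N, j ≠ i → j' ≠ i → R i j = R i j' → j = j')
    (Cstar : Fin N → Finset (Fin N))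
    (hC_irr : ∀ i, i ∉ Cstar i) (hC_card : ∀ i, (Cstar i).card = K)
    (hmin : ∀ C : Fin N → Finset (Fin N), (∀ i, i ∉ C i) → (∀ i, (C i).card = K) →
      objective R lam Cstar ≤ objective R lam C) :
    ∀ i : Fin N, (totalDeg Cstar i : ℝ) ≤ 2 * K + 1 + (N - 1) / (2 * lam) := by
  intro j
  have hN1 : 1 ≤ N := by omega
  have hN1R : (1:ℝ) ≤ (N:ℝ) := by exact_mod_cast hN1
  by_cases hcase : totalDeg Cstar j ≤ 2*K+1
  · have h1 : (0:ℝ) ≤ ((N:ℝ) - 1) / (2*lam) := div_nonneg (by linarith) (by linarith)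
    have h2 : (totalDeg Cstar j : ℝ) ≤ 2*K+1 := by exact_mod_cast hcase
    linarith
  · push_neg at hcase
    have hdj : 2*K+2 ≤ totalDeg Cstar j := hcase
    -- the sum of all total degrees is 2*K*N
    have hsum : ∑ m : Fin N, totalDeg Cstar m = 2*K*N := by
      unfold totalDeg
      rw [Finset.sum_add_distrib]
      have h2 : ∑ m : Fin N, (univ.filter (fun x => m ∈ Cstar x)).card
          = ∑ x : Fin N, (Cstar x).card := by
        simp only [Finset.card_filter]
        rw [Finset.sum_comm]
        refine Finset.sum_congr rfl (fun x _ => ?_)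
        simp [Finset.sum_ite_mem]
      rw [h2]
      have h3 : ∑ x : Fin N, (Cstar x).card = N * K := by
        simp [hC_card, Finset.sum_const, Finset.card_univ]
      rw [h3]; ring
    -- there is a node of total degree at most 2K
    have hex : ∃ k : Fin N, totalDeg Cstar k ≤ 2*K := by
      by_contra hco
      push_neg at hco
      have hle : ∑ _m : Fin N, (2*K+1) ≤ ∑ m : Fin N, totalDeg Cstar m :=
        Finset.sum_le_sum (fun m _ => hco m)
      rw [hsum, Finset.sum_const, Finset.card_univ, Fintype.card_fin, smul_eq_mul] at hle
      have : 2*K*N + N ≤ 2*K*N := by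
        calc 2*K*N + N = N*(2*K+1) := by ring
          _ ≤ 2*K*N := hle
      omega
    obtain ⟨k, hk⟩ := hex
    have hjk : j ≠ k := by
      intro h; rw [h] at hdj; omega
    -- in-neighborhoods
    set inJ := univ.filter (fun x => j ∈ Cstar x) with hinJdef
    set inK := univ.filter (fun x => k ∈ Cstar x) with hinKdef
    have hdegj : totalDeg Cstar j = K + inJ.card := by
      unfold totalDeg; rw [hC_card j]
    have hdegk : totalDeg Cstar k = K + inK.card := by
      unfold totalDeg; rw [hC_card k]
    have hinJcard : K + 2 ≤ inJ.card := by omega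
    have hinKcard : inK.card ≤ K := by omega
    -- find an in-neighbor i of j avoiding k and its in-neighbors
    have hScard : 1 ≤ (inJ \ insert k inK).card := by
      have h1 : (insert k inK).card ≤ K + 1 :=
        le_trans (Finset.card_insert_le _ _) (by omega)
      have h2 : inJ.card - (insert k inK).card ≤ (inJ \ insert k inK).card :=
        Finset.le_card_sdiff _ _
      omega
    obtain ⟨i, hi⟩ := Finset.card_pos.mp hScard
    rw [Finset.mem_sdiff] at hi
    obtain ⟨hiJ, hiOut⟩ := hi
    have hji : j ∈ Cstar i := (Finset.mem_filter.mp hiJ).2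
    have hik : i ≠ k := fun h => hiOut (Finset.mem_insert.mpr (Or.inl h))
    have hkCi : k ∉ Cstar i := fun h =>
      hiOut (Finset.mem_insert.mpr (Or.inr (Finset.mem_filter.mpr ⟨mem_univ i, h⟩)))
    have hij : i ≠ j := fun h => hC_irr i (by rw [← h] at hji; exact hji)
    -- the modified graph
    set C' : Fin N → Finset (Fin N) :=
      Function.update Cstar i (insert k ((Cstar i).erase j)) with hC'def
    have hC'i : C' i = insert k ((Cstar i).erase j) := Function.update_self _ _ _
    have hC'ne : ∀ x, x ≠ i → C' x = Cstar x := fun x hx => Function.update_of_ne hx _ _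
    have hkE : k ∉ (Cstar i).erase j := fun h => hkCi (Finset.mem_of_mem_erase h)
    have hcard' : ∀ x, (C' x).card = K := by
      intro x
      by_cases hx : x = i
      · rw [hx, hC'i, Finset.card_insert_of_notMem hkE, Finset.card_erase_of_mem hji,
          hC_card i]
        omega
      · rw [hC'ne x hx]; exact hC_card x
    have hirr' : ∀ x, x ∉ C' x := by
      intro x
      by_cases hx : x = i
      · rw [hx, hC'i]
        simp only [Finset.mem_insert, Finset.mem_erase]
        rintro (h | ⟨-, h⟩)
        · exact hik h
        · exact hC_irr i h
      · rw [hC'ne x hx]; exact hC_irr x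
    have hobj := hmin C' hirr' hcard'
    -- rank sum change
    have hrank : ∑ x : Fin N, ∑ m ∈ C' x, (R x m : ℝ)
        = (∑ x : Fin N, ∑ m ∈ Cstar x, (R x m : ℝ)) - (R i j : ℝ) + (R i k : ℝ) := by
      rw [sum_diff_one (fun x => ∑ m ∈ C' x, (R x m : ℝ))
        (fun x => ∑ m ∈ Cstar x, (R x m : ℝ)) i (fun x hx => by simp only [hC'ne x hx])]
      have hCi : ∑ m ∈ C' i, (R i m : ℝ)
          = (R i k : ℝ) + ∑ m ∈ (Cstar i).erase j, (R i m : ℝ) := by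
        rw [hC'i, Finset.sum_insert hkE]
      have herase : ∑ m ∈ (Cstar i).erase j, (R i m : ℝ) + (R i j : ℝ)
          = ∑ m ∈ Cstar i, (R i m : ℝ) := Finset.sum_erase_add _ _ hji
      rw [hCi]
      linarith
    -- degree changes
    have hfilj : (univ.filter (fun x => j ∈ C' x)) = inJ.erase i := by
      ext x
      simp only [Finset.mem_filter, Finset.mem_erase, hinJdef, mem_univ, true_and]
      by_cases hx : x = i
      · subst hx
        rw [hC'i]
        simp only [Finset.mem_insert, Finset.mem_erase]
        constructor
        · rintro (h | ⟨h1, _⟩)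
          · exact absurd h hjk
          · exact absurd rfl h1
        · rintro ⟨h, _⟩; exact absurd rfl h
      · rw [hC'ne x hx]
        constructor
        · exact fun h => ⟨hx, h⟩
        · exact fun h => h.2
    have hfilk : (univ.filter (fun x => k ∈ C' x)) = insert i inK := by
      ext x
      simp only [Finset.mem_filter, Finset.mem_insert, hinKdef, mem_univ, true_and]
      by_cases hx : x = i
      · subst hx
        rw [hC'i]
        simp
      · rw [hC'ne x hx]
        constructor
        · exact fun h => Or.inr h
        · rintro (h | h)
          · exact absurd h hx
          · exact h
    have hiKout : i ∉ inK := fun h => hiOut (Finset.mem_insert.mpr (Or.inr h))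
    have hnatj : totalDeg C' j + 1 = totalDeg Cstar j := by
      unfold totalDeg
      rw [hC'ne j (Ne.symm hij), hfilj, Finset.card_erase_of_mem hiJ, hC_card j,
        ← hinJdef]
      have hc : 1 ≤ inJ.card := Finset.card_pos.mpr ⟨i, hiJ⟩
      omega
    have hnatk : totalDeg C' k = totalDeg Cstar k + 1 := by
      unfold totalDeg
      rw [hC'ne k (Ne.symm hik), hfilk, Finset.card_insert_of_notMem hiKout, hC_card k,
        ← hinKdef]
      omega
    have hoth : ∀ m, m ≠ j → m ≠ k → totalDeg C' m = totalDeg Cstar m := by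
      intro m hmj hmk
      have hfeq : (univ.filter (fun x => m ∈ C' x)) = univ.filter (fun x => m ∈ Cstar x) := by
        ext x
        simp only [Finset.mem_filter, mem_univ, true_and]
        by_cases hx : x = i
        · subst hx
          rw [hC'i]
          simp [Finset.mem_insert, Finset.mem_erase, hmj, hmk]
        · rw [hC'ne x hx]
      unfold totalDeg
      rw [hfeq, hcard' m, hC_card m]
    -- penalty sum change
    have hpen : ∑ m : Fin N, (totalDeg C' m : ℝ) ^ 2
        = (∑ m : Fin N, (totalDeg Cstar m : ℝ) ^ 2)
          - (totalDeg Cstar j : ℝ) ^ 2 - (totalDeg Cstar k : ℝ) ^ 2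
          + ((totalDeg Cstar j : ℝ) - 1) ^ 2 + ((totalDeg Cstar k : ℝ) + 1) ^ 2 := by
      rw [sum_diff_two (fun m => (totalDeg C' m : ℝ) ^ 2)
        (fun m => (totalDeg Cstar m : ℝ) ^ 2) j k hjk
        (fun m hmj hmk => by simp only [hoth m hmj hmk])]
      have hj' : (totalDeg C' j : ℝ) = (totalDeg Cstar j : ℝ) - 1 := by
        have := hnatj
        push_cast [← this]
        ring
      have hk' : (totalDeg C' k : ℝ) = (totalDeg Cstar k : ℝ) + 1 := by
        exact_mod_cast congrArg (Nat.cast : ℕ → ℝ) hnatk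
      rw [hj', hk']
    -- extract the key inequality from minimality
    unfold objective at hobj
    rw [hrank, hpen] at hobj
    have hRik : (R i k : ℝ) ≤ (N : ℝ) - 1 := by
      have h1 := (hR_mem i k (Ne.symm hik)).2
      have h2 : ((N - 1 : ℕ) : ℝ) = (N : ℝ) - 1 := by
        push_cast [Nat.cast_sub hN1]; ring
      rw [← h2]; exact_mod_cast h1
    have hRij : (1:ℝ) ≤ (R i j : ℝ) := by
      exact_mod_cast (hR_mem i j (Ne.symm hij)).1
    have hdkR : (totalDeg Cstar k : ℝ) ≤ 2*K := by exact_mod_cast hk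
    have hstep : 0 ≤ ((R i k : ℝ) - (R i j : ℝ))
        + lam * (2*(totalDeg Cstar k : ℝ) - 2*(totalDeg Cstar j : ℝ) + 2) := by
      nlinarith [hobj]
    have h2l : 0 < 2*lam := by linarith
    have hfin : (totalDeg Cstar j : ℝ) - (2*K+1) ≤ ((N:ℝ)-1) / (2*lam) := by
      rw [le_div_iff₀ h2l]
      nlinarith [hstep, mul_le_mul_of_nonneg_left hdkR hlam.le]
    linarith
end

section
/- Fix K ≥ 1, λ > 0, and N ≥ K+1. Let G* be a directed graph on N nodes with out-degree exactly K minimizing L(G) = Σ_i Σ_{x ∈ C_i} R_i(x) + λ Σ_i |G_i|² (ranks as above). Then λ·(max_i |G_i|)² ≤ NK(N−1) + 4λNK², hence max_i |G_i| ≤ sqrt(NK(N−1)/λ + 4NK²). -/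
/-!
The circulant graph in which node `i` points to `i + 1, …, i + K` (mod `N`) is feasible, each of
its `NK` ranks is at most `N - 1` and every node has total degree `2K`, so minimality gives
`L(G*) ≤ NK(N - 1) + 4λNK²`. Conversely ranks are nonnegative, so
`L(G*) ≥ λ Σᵢ |Gᵢ|² ≥ λ (maxᵢ |Gᵢ|)²`.
-/

open Finset

theorem Finset.sq_sup_le_sum_sq {ι : Type*} (s : Finset ι) (f : ι → ℕ) :
    s.sup f ^ 2 ≤ ∑ i ∈ s, f i ^ 2 := by
  refine Finset.sup_induction (p := fun n => n ^ 2 ≤ ∑ i ∈ s, f i ^ 2) (by simp) ?_ ?_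
  · intro a ha b hb
    rcases le_total a b with hab | hab
    · rwa [sup_eq_right.mpr hab]
    · rwa [sup_eq_left.mpr hab]
  · exact fun i hi => single_le_sum (f := fun i => f i ^ 2) (fun _ _ => Nat.zero_le _) hi

theorem le_sqrt_div_add_of_mul_sq_le {x a b lam : ℝ} (hlam : 0 < lam)
    (h : lam * x ^ 2 ≤ a + lam * b) : x ≤ √(a / lam + b) := by
  refine (le_abs_self x).trans (Real.abs_le_sqrt ?_)
  calc x ^ 2 = lam * x ^ 2 / lam := by field_simp
    _ ≤ (a + lam * b) / lam := by gcongr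
    _ = a / lam + b := by field_simp

theorem Fin.card_filter_val_mem_Icc_one {N K : ℕ} (hK : K < N) :
    #{d : Fin N | d.val ∈ Icc 1 K} = K := by
  have hval : ({d : Fin N | d.val ∈ Icc 1 K} : Finset (Fin N)).map Fin.valEmbedding = Icc 1 K := by
    ext m
    simp only [mem_map, mem_filter, mem_univ, true_and, Fin.valEmbedding_apply, mem_Icc]
    exact ⟨by rintro ⟨d, hd, rfl⟩; exact hd, fun hm => ⟨⟨m, by omega⟩, hm, rfl⟩⟩
  rw [← card_map, hval, Nat.card_Icc, Nat.add_sub_cancel]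

section Circulant

variable {N K : ℕ}

/-- Node `i` points to `i + 1, …, i + K`, with arithmetic mod `N`. -/
def circulant (K : ℕ) (i : Fin N) : Finset (Fin N) :=
  {j | (j - i).val ∈ Icc 1 K}

theorem self_notMem_circulant (i : Fin N) : i ∉ circulant K i := by
  have : NeZero N := NeZero.of_pos i.pos
  simp [circulant]

theorem card_circulant (hK : K < N) (i : Fin N) : #(circulant K i) = K := by
  have : NeZero N := NeZero.of_pos (by omega)
  exact (card_equiv (Equiv.subRight i) (by simp [circulant])).trans
    (Fin.card_filter_val_mem_Icc_one hK)

theorem card_filter_mem_circulant (hK : K < N) (i : Fin N) :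
    #{j | i ∈ circulant K j} = K := by
  have : NeZero N := NeZero.of_pos (by omega)
  exact (card_equiv (Equiv.subLeft i) (by simp [circulant])).trans
    (Fin.card_filter_val_mem_Icc_one hK)

theorem totalDeg_circulant (hK : K < N) (i : Fin N) : totalDeg (circulant K) i = 2 * K := by
  rw [totalDeg, card_circulant hK, card_filter_mem_circulant hK]
  ring

end Circulant

theorem sum_sum_rank_le {N K : ℕ} (R : Fin N → Fin N → ℕ)
    (hR : ∀ i j : Fin N, j ≠ i → R i j ≤ N - 1) (C : Fin N → Finset (Fin N))
    (hC_irr : ∀ i, i ∉ C i) (hC_card : ∀ i, #(C i) = K) :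
    ∑ i : Fin N, ∑ j ∈ C i, (R i j : ℝ) ≤ N * K * (N - 1) := by
  have hrow : ∀ i : Fin N, ∑ j ∈ C i, (R i j : ℝ) ≤ K * ((N : ℝ) - 1) := fun i => by
    have hrank : ∀ j ∈ C i, (R i j : ℝ) ≤ (N : ℝ) - 1 := fun j hj => by
      have hji : j ≠ i := fun h => hC_irr i (h ▸ hj)
      rw [← Nat.cast_pred i.pos]
      exact_mod_cast hR i j hji
    calc ∑ j ∈ C i, (R i j : ℝ) ≤ ∑ _j ∈ C i, ((N : ℝ) - 1) := sum_le_sum hrank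
      _ = K * ((N : ℝ) - 1) := by rw [sum_const, hC_card, nsmul_eq_mul]
  calc ∑ i : Fin N, ∑ j ∈ C i, (R i j : ℝ) ≤ ∑ _i : Fin N, K * ((N : ℝ) - 1) :=
        sum_le_sum fun i _ => hrow i
    _ = N * K * (N - 1) := by simp; ring

theorem objective_circulant_le {N K : ℕ} (hK : K < N) (R : Fin N → Fin N → ℕ)
    (hR : ∀ i j : Fin N, j ≠ i → R i j ≤ N - 1) (lam : ℝ) :
    objective R lam (circulant K) ≤ N * K * (N - 1) + 4 * lam * N * K ^ 2 := by
  have hranks := sum_sum_rank_le R hR _ self_notMem_circulant (card_circulant hK)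
  have hdegs : lam * ∑ i : Fin N, (totalDeg (circulant K) i : ℝ) ^ 2 = 4 * lam * N * K ^ 2 := by
    simp only [totalDeg_circulant hK, sum_const, card_univ, Fintype.card_fin, nsmul_eq_mul]
    push_cast
    ring
  rw [objective, hdegs]
  linarith

theorem mul_sq_sup_totalDeg_le_objective {N : ℕ} {lam : ℝ} (hlam : 0 ≤ lam)
    (R : Fin N → Fin N → ℕ) (C : Fin N → Finset (Fin N)) :
    lam * ((univ.sup (totalDeg C) : ℕ) : ℝ) ^ 2 ≤ objective R lam C := by
  have hdegs : ((univ.sup (totalDeg C) : ℕ) : ℝ) ^ 2 ≤ ∑ i : Fin N, (totalDeg C i : ℝ) ^ 2 := by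
    exact_mod_cast univ.sq_sup_le_sum_sq (totalDeg C)
  have hranks : 0 ≤ ∑ i : Fin N, ∑ j ∈ C i, (R i j : ℝ) := by positivity
  rw [objective]
  nlinarith

theorem max_degree_sq_bound_of_minimizer_general (N K : ℕ) (hN : K + 1 ≤ N)
    (lam : ℝ) (hlam : 0 < lam)
    (R : Fin N → Fin N → ℕ)
    (hR_mem : ∀ i j : Fin N, j ≠ i → 1 ≤ R i j ∧ R i j ≤ N - 1)
    (Cstar : Fin N → Finset (Fin N))
    (hmin : ∀ C : Fin N → Finset (Fin N), (∀ i, i ∉ C i) → (∀ i, (C i).card = K) →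
      objective R lam Cstar ≤ objective R lam C) :
    lam * (((Finset.univ.sup (totalDeg Cstar) : ℕ) : ℝ)) ^ 2
        ≤ N * K * (N - 1) + 4 * lam * N * K ^ 2
    ∧ (((Finset.univ.sup (totalDeg Cstar) : ℕ) : ℝ))
        ≤ Real.sqrt ((N * K * (N - 1)) / lam + 4 * N * K ^ 2) := by
  have hbound : lam * ((univ.sup (totalDeg Cstar) : ℕ) : ℝ) ^ 2
      ≤ N * K * (N - 1) + 4 * lam * N * K ^ 2 :=
    calc _ ≤ objective R lam Cstar := mul_sq_sup_totalDeg_le_objective hlam.le R Cstar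
      _ ≤ objective R lam (circulant K) :=
        hmin _ self_notMem_circulant (card_circulant (by omega))
      _ ≤ _ := objective_circulant_le (by omega) R (fun i j h => (hR_mem i j h).2) lam
  exact ⟨hbound, le_sqrt_div_add_of_mul_sq_le hlam (by linarith)⟩

/-- For any minimizer `G*` of the K-RNNG objective over out-degree-`K` directed graphs,
`λ (max_i |G_i|)² ≤ N K (N−1) + 4 λ N K²`, hence
`max_i |G_i| ≤ sqrt(N K (N−1)/λ + 4 N K²)`. -/
theorem max_degree_sq_bound_of_minimizer (N K : ℕ) (hK : 1 ≤ K) (hN : K + 1 ≤ N)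
    (lam : ℝ) (hlam : 0 < lam)
    (R : Fin N → Fin N → ℕ)
    (hR_mem : ∀ i j : Fin N, j ≠ i → 1 ≤ R i j ∧ R i j ≤ N - 1)
    (hR_inj : ∀ i j j' : Fin N, j ≠ i → j' ≠ i → R i j = R i j' → j = j')
    (Cstar : Fin N → Finset (Fin N))
    (hC_irr : ∀ i, i ∉ Cstar i) (hC_card : ∀ i, (Cstar i).card = K)
    (hmin : ∀ C : Fin N → Finset (Fin N), (∀ i, i ∉ C i) → (∀ i, (C i).card = K) →
      objective R lam Cstar ≤ objective R lam C) :
    lam * (((Finset.univ.sup (totalDeg Cstar) : ℕ) : ℝ)) ^ 2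
        ≤ N * K * (N - 1) + 4 * lam * N * K ^ 2
    ∧ (((Finset.univ.sup (totalDeg Cstar) : ℕ) : ℝ))
        ≤ Real.sqrt ((N * K * (N - 1)) / lam + 4 * N * K ^ 2) :=
  max_degree_sq_bound_of_minimizer_general N K hN lam hlam R hR_mem Cstar hmin
end

section
/- In the setting of the previous statement with σ_1² > σ_2² and σ_1² − σ_2² > v², let X_1,...,X_m be i.i.d. copies of X and Y_1,...,Y_n i.i.d. copies of Y (all independent, with all pairwise coordinate fourth moments finite). Then with probability tending to 1 as d → ∞, every within-Y distance is smaller than every between-sample distance, which in turn is smaller than every within-X distance: max_{j≠j'} ‖Y_j − Y_{j'}‖² < min_{i,j} ‖X_i − Y_j‖² and max_{i,j} ‖X_i − Y_j‖² < min_{i≠i'} ‖X_i − X_{i'}‖². -/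
/-!
For two distinct sample points `U, V`, the normalised squared distance `(1/d) ∑_{k<d} (U_k - V_k)²`
is an average of i.i.d. integrable terms, so by the strong law of large numbers it converges
almost surely to `E(U₀ - V₀)² = Var U₀ + Var V₀ + (E U₀ - E V₀)²`: to `2σ₂²` within `Y`, to
`σ₁² + σ₂² + v²` between the samples and to `2σ₁²` within `X`. Since `v² < σ₁² - σ₂²` these limits
are strictly increasing, so almost surely the finitely many required inequalities hold for all
large `d`; and an event that almost surely holds eventually has probability tending to `1`.
-/

open MeasureTheory ProbabilityTheory Filter Finset Topology

lemma eventually_lt_of_tendsto_div_natCast {u v : ℕ → ℝ} {a b : ℝ}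
    (hu : Tendsto (fun d ↦ u d / d) atTop (𝓝 a)) (hv : Tendsto (fun d ↦ v d / d) atTop (𝓝 b))
    (hab : a < b) : ∀ᶠ d in atTop, u d < v d := by
  filter_upwards [hu.eventually_lt hv hab, eventually_gt_atTop 0] with d hd hd0
  exact (div_lt_div_iff_of_pos_right (Nat.cast_pos.2 hd0)).1 hd

lemma variance_id_eq_of_integral_eq {ν : Measure ℝ} {m s : ℝ} (hmean : ∫ x, x ∂ν = m)
    (hvar : ∫ x, (x - m) ^ 2 ∂ν = s) : Var[id; ν] = s := by
  rw [variance_eq_integral measurable_id.aemeasurable]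
  exact hmean ▸ hvar

section

variable {Ω : Type*} {mΩ : MeasurableSpace Ω} {μ : Measure Ω} [IsProbabilityMeasure μ]

lemma ProbabilityTheory.IndepFun.integral_sub_sq {A B : Ω → ℝ} (hAB : A ⟂ᵢ[μ] B)
    (hA : MemLp A 2 μ) (hB : MemLp B 2 μ) :
    μ[(A - B) ^ 2] = Var[A; μ] + Var[B; μ] + (μ[A] - μ[B]) ^ 2 := by
  have h := variance_eq_sub (hA.sub hB)
  rw [variance_sub hA hB, hAB.covariance_eq_zero hA hB,
    integral_sub' (hA.integrable one_le_two) (hB.integrable one_le_two)] at h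
  linarith

lemma ae_tendsto_sum_sq_sub_div {ι : Type*} {f : ι × ℕ → Ω → ℝ} {ν : ι → Measure ℝ}
    (hf : ∀ p, Measurable (f p)) (hind : iIndepFun f μ) (hν : ∀ a k, μ.map (f (a, k)) = ν a)
    (h2 : ∀ a, MemLp id 2 (ν a)) {a b : ι} (hab : a ≠ b) :
    ∀ᵐ ω ∂μ, Tendsto (fun d : ℕ ↦ (∑ k ∈ range d, (f (a, k) ω - f (b, k) ω) ^ 2) / d) atTop
      (𝓝 (Var[id; ν a] + Var[id; ν b] + ((ν a)[id] - (ν b)[id]) ^ 2)) := by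
  set Z : ℕ → Ω → ℝ := fun k ↦ (f (a, k) - f (b, k)) ^ 2
  set pair : ℕ → Ω → ℝ × ℝ := fun k ω ↦ (f (a, k) ω, f (b, k) ω)
  have hg : Measurable fun x : ℝ × ℝ ↦ (x.1 - x.2) ^ 2 := by fun_prop
  have hpair_map (k : ℕ) : μ.map (pair k) = (ν a).prod (ν b) := by
    rw [← hν a k, ← hν b k]
    exact (indepFun_iff_map_prod_eq_prod_map_map (hf _).aemeasurable (hf _).aemeasurable).1
      (hind.indepFun (by simpa using hab))
  have hident (k : ℕ) : IdentDistrib (Z k) (Z 0) μ μ :=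
    (IdentDistrib.mk ((hf _).prodMk (hf _)).aemeasurable ((hf _).prodMk (hf _)).aemeasurable
      (by rw [hpair_map, hpair_map])).comp hg
  have hindep : Pairwise (Function.onFun (· ⟂ᵢ[μ] ·) Z) := fun k l hkl ↦
    (hind.indepFun_prodMk_prodMk hf (a, k) (b, k) (a, l) (b, l) (by simp [hkl]) (by simp [hkl])
      (by simp [hkl]) (by simp [hkl])).comp hg hg
  have hL2 (c : ι) : MemLp (f (c, 0)) 2 μ :=
    (memLp_map_measure_iff aestronglyMeasurable_id (hf _).aemeasurable).1 (hν c 0 ▸ h2 c)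
  have hmean (c : ι) : μ[f (c, 0)] = (ν c)[id] := by
    rw [← hν c 0, integral_map (hf _).aemeasurable aestronglyMeasurable_id]
    rfl
  have hvar (c : ι) : Var[f (c, 0); μ] = Var[id; ν c] := by
    rw [← hν c 0, variance_id_map (hf _).aemeasurable]
  have hEZ : μ[Z 0] = Var[id; ν a] + Var[id; ν b] + ((ν a)[id] - (ν b)[id]) ^ 2 := by
    rw [(hind.indepFun (by simpa using hab)).integral_sub_sq (hL2 a) (hL2 b), hmean, hmean,
      hvar, hvar]
  rw [← hEZ]
  exact strong_law_ae_real Z ((hL2 a).sub (hL2 b)).integrable_sq hindep hident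

lemma tendsto_measure_one_of_ae_eventually_mem {S : ℕ → Set Ω}
    (h : ∀ᵐ ω ∂μ, ∀ᶠ d in atTop, ω ∈ S d) : Tendsto (fun d ↦ μ (S d)) atTop (𝓝 1) := by
  set T : ℕ → Set Ω := fun d ↦ ⋂ e ≥ d, S e
  have hT : Monotone T := fun d d' hdd' ↦ Set.biInter_subset_biInter_left fun e he ↦ hdd'.trans he
  have hunion : μ (⋃ d, T d) = 1 := by
    have hmem : ∀ᵐ ω ∂μ, ω ∈ ⋃ d, T d :=
      h.mono fun ω hω ↦ by simpa [T, eventually_atTop] using hω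
    rw [← measure_univ (μ := μ)]
    exact measure_congr (ae_eq_univ.2 (ae_iff.1 hmem))
  exact tendsto_of_tendsto_of_tendsto_of_le_of_le (hunion ▸ tendsto_measure_iUnion_atTop hT)
    tendsto_const_nhds (fun d ↦ measure_mono (Set.biInter_subset_of_mem le_rfl))
    (fun d ↦ prob_le_one)

end

theorem distance_ordering_high_dim_general (m n : ℕ)
    {Ω : Type*} [MeasureSpace Ω] [IsProbabilityMeasure (ℙ : Measure Ω)]
    (X : Fin m → ℕ → Ω → ℝ) (Y : Fin n → ℕ → Ω → ℝ)
    (νX νY : Measure ℝ) (μ₁ μ₂ σ₁ σ₂ : ℝ)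
    (hmX : ∀ i k, Measurable (X i k)) (hmY : ∀ j k, Measurable (Y j k))
    (hindep : iIndepFun
      (fun p : (Fin m ⊕ Fin n) × ℕ =>
        Sum.elim (fun i => X i p.2) (fun j => Y j p.2) p.1) ℙ)
    (hidX : ∀ i k, Measure.map (X i k) ℙ = νX)
    (hidY : ∀ j k, Measure.map (Y j k) ℙ = νY)
    (hmean₁ : ∫ x, x ∂νX = μ₁) (hvar₁ : ∫ x, (x - μ₁) ^ 2 ∂νX = σ₁ ^ 2)
    (hmean₂ : ∫ x, x ∂νY = μ₂) (hvar₂ : ∫ x, (x - μ₂) ^ 2 ∂νY = σ₂ ^ 2)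
    (hmom4X : MemLp id 4 νX) (hmom4Y : MemLp id 4 νY)
    (hv : (μ₁ - μ₂) ^ 2 < σ₁ ^ 2 - σ₂ ^ 2) :
    Tendsto (fun d : ℕ =>
        (ℙ : Measure Ω) {ω |
          (∀ (j j' : Fin n), j ≠ j' → ∀ (i : Fin m) (j'' : Fin n),
            ∑ k ∈ Finset.range d, (Y j k ω - Y j' k ω) ^ 2
              < ∑ k ∈ Finset.range d, (X i k ω - Y j'' k ω) ^ 2)
          ∧ (∀ (i i' : Fin m), i ≠ i' → ∀ (i'' : Fin m) (j : Fin n),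
            ∑ k ∈ Finset.range d, (X i'' k ω - Y j k ω) ^ 2
              < ∑ k ∈ Finset.range d, (X i k ω - X i' k ω) ^ 2)})
      atTop (nhds 1) := by
  set f : (Fin m ⊕ Fin n) × ℕ → Ω → ℝ := fun p ↦ Sum.elim (fun i ↦ X i p.2) (fun j ↦ Y j p.2) p.1
  set ν : Fin m ⊕ Fin n → Measure ℝ := Sum.elim (fun _ ↦ νX) (fun _ ↦ νY)
  have hf : ∀ p, Measurable (f p) := by
    rintro ⟨i | j, k⟩
    exacts [hmX i k, hmY j k]
  have hν : ∀ a k, (ℙ : Measure Ω).map (f (a, k)) = ν a := by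
    rintro (i | j) k
    exacts [hidX i k, hidY j k]
  have h2 : ∀ a, MemLp id 2 (ν a) := by
    rintro (i | j)
    · have : IsProbabilityMeasure νX :=
        hidX i 0 ▸ Measure.isProbabilityMeasure_map (hmX i 0).aemeasurable
      exact hmom4X.mono_exponent (by norm_num)
    · have : IsProbabilityMeasure νY :=
        hidY j 0 ▸ Measure.isProbabilityMeasure_map (hmY j 0).aemeasurable
      exact hmom4Y.mono_exponent (by norm_num)
  have hlim : ∀ᵐ ω, ∀ a b, a ≠ b → Tendsto
      (fun d : ℕ ↦ (∑ k ∈ range d, (f (a, k) ω - f (b, k) ω) ^ 2) / d) atTop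
      (𝓝 (Var[id; ν a] + Var[id; ν b] + ((ν a)[id] - (ν b)[id]) ^ 2)) := by
    simp only [ae_all_iff, eventually_imp_distrib_left]
    exact fun a b hab ↦ ae_tendsto_sum_sq_sub_div hf hindep hν h2 hab
  refine tendsto_measure_one_of_ae_eventually_mem ?_
  filter_upwards [hlim] with ω hω
  simp only [eventually_and, eventually_all]
  refine ⟨fun j j' hjj' i j'' ↦ eventually_lt_of_tendsto_div_natCast
      (hω (.inr j) (.inr j') (by simpa using hjj')) (hω (.inl i) (.inr j'') (by simp)) ?_,
    fun i i' hii' i'' j ↦ eventually_lt_of_tendsto_div_natCast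
      (hω (.inl i'') (.inr j) (by simp)) (hω (.inl i) (.inl i') (by simpa using hii')) ?_⟩
  all_goals
    simp only [ν, Sum.elim_inl, Sum.elim_inr, id_eq, hmean₁, hmean₂,
      variance_id_eq_of_integral_eq hmean₁ hvar₁, variance_id_eq_of_integral_eq hmean₂ hvar₂]
    nlinarith [sq_nonneg (μ₁ - μ₂)]

/-- High-dimensional separation of distances: with `X_1,...,X_m` i.i.d. with i.i.d.
coordinates of law `νX` (mean `μ₁`, variance `σ₁²`) and `Y_1,...,Y_n` i.i.d. with i.i.d.
coordinates of law `νY` (mean `μ₂`, variance `σ₂²`), all coordinates jointly independent,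
finite fourth moments, and `σ₁² > σ₂²`, `σ₁² − σ₂² > v² = (μ₁−μ₂)²`, the probability that
every within-Y squared distance is smaller than every between-sample squared distance and
every between-sample squared distance is smaller than every within-X squared distance
tends to 1 as the dimension `d → ∞`. -/
theorem distance_ordering_high_dim (m n : ℕ)
    {Ω : Type*} [MeasureSpace Ω] [IsProbabilityMeasure (ℙ : Measure Ω)]
    (X : Fin m → ℕ → Ω → ℝ) (Y : Fin n → ℕ → Ω → ℝ)
    (νX νY : Measure ℝ) (μ₁ μ₂ σ₁ σ₂ : ℝ)
    (hmX : ∀ i k, Measurable (X i k)) (hmY : ∀ j k, Measurable (Y j k))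
    (hindep : iIndepFun
      (fun p : (Fin m ⊕ Fin n) × ℕ =>
        Sum.elim (fun i => X i p.2) (fun j => Y j p.2) p.1) ℙ)
    (hidX : ∀ i k, Measure.map (X i k) ℙ = νX)
    (hidY : ∀ j k, Measure.map (Y j k) ℙ = νY)
    (hmean₁ : ∫ x, x ∂νX = μ₁) (hvar₁ : ∫ x, (x - μ₁) ^ 2 ∂νX = σ₁ ^ 2)
    (hmean₂ : ∫ x, x ∂νY = μ₂) (hvar₂ : ∫ x, (x - μ₂) ^ 2 ∂νY = σ₂ ^ 2)
    (hmom4X : MemLp id 4 νX) (hmom4Y : MemLp id 4 νY)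
    (hσ : σ₂ ^ 2 < σ₁ ^ 2) (hv : (μ₁ - μ₂) ^ 2 < σ₁ ^ 2 - σ₂ ^ 2) :
    Tendsto (fun d : ℕ =>
        (ℙ : Measure Ω) {ω |
          (∀ (j j' : Fin n), j ≠ j' → ∀ (i : Fin m) (j'' : Fin n),
            ∑ k ∈ Finset.range d, (Y j k ω - Y j' k ω) ^ 2
              < ∑ k ∈ Finset.range d, (X i k ω - Y j'' k ω) ^ 2)
          ∧ (∀ (i i' : Fin m), i ≠ i' → ∀ (i'' : Fin m) (j : Fin n),
            ∑ k ∈ Finset.range d, (X i'' k ω - Y j k ω) ^ 2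
              < ∑ k ∈ Finset.range d, (X i k ω - X i' k ω) ^ 2)})
      atTop (nhds 1) :=
  distance_ordering_high_dim_general m n X Y νX νY μ₁ μ₂ σ₁ σ₂ hmX hmY hindep hidX hidY hmean₁ hvar₁
    hmean₂ hvar₂ hmom4X hmom4Y hv
end
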